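/- arXiv:2111.01961 — 3 statements merged into one kernel-verified Lean document; each statement's English description precedes it below -/
import Mathlib

section
/- If a discrete random vector (Y_v)_{v∈V} with strictly positive joint probability mass function factorizes with respect to an undirected graph G, i.e., its pmf is a product of nonnegative functions each depending only on the variables in a complete subset (clique) of G, then for any two non-adjacent vertices v and u, Y_v and Y_u are conditionally independent given all remaining variables. -/
/-!
Fix all coordinates except those at `v` and `u`, and write `F a b` for the pmf at the point
with `Y_v = a`, `Y_u = b`. The clique factors not containing `u` do not see `b`, and those
containing `u` do not see `a`, since a clique containing both would make `v` and `u` adjacent.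
So `F a b` is a product of a function of `a` and a function of `b`, i.e.
`F a b * F a' b' = F a b' * F a' b`, and summing this identity over `a'` and `b'` gives
conditional independence.
-/

open Finset Function

theorem mul_sum_sum_eq_sum_mul_sum_of_mul_eq_mul {ι κ R : Type*} [Fintype ι] [Fintype κ]
    [CommSemiring R] (F : ι → κ → R)
    (hF : ∀ a a' b b', F a b * F a' b' = F a b' * F a' b) (a : ι) (b : κ) :
    F a b * ∑ a', ∑ b', F a' b' = (∑ b', F a b') * ∑ a', F a' b := by
  rw [mul_sum, sum_mul_sum, sum_comm]
  simp_rw [mul_sum, hF a]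

section CliqueFactorization

variable {V α M : Type*} [Fintype V] [DecidableEq V] [CommMonoid M] {φ : Finset V → (V → α) → M}

theorem prod_filter_not_mem_update_eq (hlocal : ∀ C, DependsOn (φ C) C) (u : V)
    (x : V → α) (b b' : α) :
    ∏ C ∈ univ with u ∉ C, φ C (update x u b) = ∏ C ∈ univ with u ∉ C, φ C (update x u b') := by
  refine prod_congr rfl fun C hC => hlocal C fun w hw => ?_
  have hwu : w ≠ u := ne_of_mem_of_not_mem hw (mem_filter.1 hC).2
  simp only [update_of_ne hwu]

theorem prod_filter_mem_update_update_eq (G : SimpleGraph V) (hlocal : ∀ C, DependsOn (φ C) C)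
    (hclique : ∀ C : Finset V, ¬ G.IsClique (C : Set V) → ∀ y, φ C y = 1)
    {v u : V} (hnadj : ¬ G.Adj v u) (z : V → α) (a a' b : α) :
    ∏ C ∈ univ with u ∈ C, φ C (update (update z v a) u b) =
      ∏ C ∈ univ with u ∈ C, φ C (update (update z v a') u b) := by
  refine prod_congr rfl fun C hC => ?_
  have huC : u ∈ C := (mem_filter.1 hC).2
  by_cases hcl : G.IsClique (C : Set V)
  · refine hlocal C fun w hw => ?_
    by_cases hwu : w = u
    · simp only [hwu, update_self]
    · have hwv : w ≠ v := by
        rintro rfl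
        exact hnadj (hcl hw huC hwu)
      simp only [update_of_ne hwu, update_of_ne hwv]
  · rw [hclique C hcl, hclique C hcl]

theorem prod_update_update_mul_comm (G : SimpleGraph V) (hlocal : ∀ C, DependsOn (φ C) C)
    (hclique : ∀ C : Finset V, ¬ G.IsClique (C : Set V) → ∀ y, φ C y = 1)
    {v u : V} (hnadj : ¬ G.Adj v u) (z : V → α) (a a' b b' : α) :
    (∏ C, φ C (update (update z v a) u b)) * ∏ C, φ C (update (update z v a') u b') =
      (∏ C, φ C (update (update z v a) u b')) * ∏ C, φ C (update (update z v a') u b) := by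
  simp only [← prod_filter_mul_prod_filter_not univ (u ∈ ·)]
  rw [prod_filter_mem_update_update_eq G hlocal hclique hnadj z a' a b',
    prod_filter_mem_update_update_eq G hlocal hclique hnadj z a' a b,
    prod_filter_not_mem_update_eq hlocal u _ b' b, prod_filter_not_mem_update_eq hlocal u _ b' b]
  ac_rfl

end CliqueFactorization

theorem factorization_implies_pairwise_markov_general
    {V : Type*} [Fintype V] [DecidableEq V] (G : SimpleGraph V)
    {α : Type*} [Fintype α]
    (f : (V → α) → ℝ)
    (φ : Finset V → ((V → α) → ℝ))
    (hlocal : ∀ (C : Finset V) (y y' : V → α), (∀ w ∈ C, y w = y' w) → φ C y = φ C y')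
    (hclique : ∀ C : Finset V, ¬ G.IsClique (↑C : Set V) → ∀ y, φ C y = 1)
    (hfact : ∀ y, f y = ∏ C : Finset V, φ C y)
    (v u : V) (hnadj : ¬ G.Adj v u) :
    ∀ (z : V → α) (a b : α),
      f (Function.update (Function.update z v a) u b) *
          (∑ a' : α, ∑ b' : α, f (Function.update (Function.update z v a') u b')) =
        (∑ b' : α, f (Function.update (Function.update z v a) u b')) *
          (∑ a' : α, f (Function.update (Function.update z v a') u b)) := by
  intro z
  refine mul_sum_sum_eq_sum_mul_sum_of_mul_eq_mul _ fun a a' b b' => ?_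
  simp only [hfact]
  exact prod_update_update_mul_comm G (fun C _ _ => hlocal C _ _) hclique hnadj z a a' b b'

/-- (Hammersley–Clifford, one direction.) If a strictly positive joint pmf
f on a finite product space factorizes with respect to an undirected graph G — that is,
f(y) = ∏_C φ_C(y) where each factor φ_C depends only on the coordinates in C and is
trivial (≡ 1) unless C is a complete subset (clique) of G — then for any two
non-adjacent vertices v, u, the variables Y_v and Y_u are conditionally independent
given all the remaining variables:
f(a,b,z)·P(rest = z) = P(Y_v = a, rest = z)·P(Y_u = b, rest = z). -/
theorem factorization_implies_pairwise_markov
    {V : Type*} [Fintype V] [DecidableEq V] (G : SimpleGraph V)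
    {α : Type*} [Fintype α]
    (f : (V → α) → ℝ) (hpos : ∀ y, 0 < f y) (hsum : ∑ y : V → α, f y = 1)
    (φ : Finset V → ((V → α) → ℝ))
    (hlocal : ∀ (C : Finset V) (y y' : V → α), (∀ w ∈ C, y w = y' w) → φ C y = φ C y')
    (hclique : ∀ C : Finset V, ¬ G.IsClique (↑C : Set V) → ∀ y, φ C y = 1)
    (hfact : ∀ y, f y = ∏ C : Finset V, φ C y)
    (v u : V) (hvu : v ≠ u) (hnadj : ¬ G.Adj v u) :
    ∀ (z : V → α) (a b : α),
      f (Function.update (Function.update z v a) u b) *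
          (∑ a' : α, ∑ b' : α, f (Function.update (Function.update z v a') u b')) =
        (∑ b' : α, f (Function.update (Function.update z v a) u b')) *
          (∑ a' : α, f (Function.update (Function.update z v a') u b)) :=
  factorization_implies_pairwise_markov_general G f φ hlocal hclique hfact v u hnadj
end

section
/- Let (Y_v)_{v∈V} be defined by the structural equations Y_v = g_v(Y_{pa(v)}, ε_v) over a finite DAG G with independent noises ε_v. Then for every vertex v, Y_v is conditionally independent of the non-descendant variables beyond its parents given its parents; equivalently, Y_v ⫫ Y_{nd(v)∖pa(v)} | Y_{pa(v)} (the Directed Markov Property holds with respect to G). -/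
open Finset
open scoped Classical

/-- Probability of an event `A` under the pmf `p` on a finite sample space. -/
noncomputable def Pr {Ω : Type*} [Fintype Ω] (p : Ω → ℝ) (A : Ω → Prop) : ℝ :=
  ∑ ω : Ω, if A ω then p ω else 0

/-- classical if-then-else into ℝ, with a fixed decidability instance. -/
noncomputable def cite (P : Prop) (a b : ℝ) : ℝ := @ite ℝ P (Classical.propDecidable P) a b

lemma cite_pos {P : Prop} (h : P) (a b : ℝ) : cite P a b = a := by
  unfold cite; exact if_pos h

lemma cite_neg {P : Prop} (h : ¬ P) (a b : ℝ) : cite P a b = b := by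
  unfold cite; exact if_neg h

@[simp] lemma cite_true (a b : ℝ) : cite True a b = a := cite_pos trivial a b

lemma cite_and_mul (P Q : Prop) (a b : ℝ) :
    cite (P ∧ Q) (a * b) 0 = cite P a 0 * cite Q b 0 := by
  by_cases hP : P <;> by_cases hQ : Q <;>
    simp [cite_pos, cite_neg, hP, hQ, cite]

lemma Pr_def {Ω : Type*} [Fintype Ω] (p : Ω → ℝ) (A : Ω → Prop) :
    Pr p A = ∑ ω : Ω, cite (A ω) (p ω) 0 := rfl

lemma Pr_congr {Ω : Type*} [Fintype Ω] (p : Ω → ℝ) {A B : Ω → Prop}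
    (h : ∀ ω, A ω ↔ B ω) : Pr p A = Pr p B := by
  rw [Pr_def, Pr_def]
  refine Finset.sum_congr rfl fun ω _ => ?_
  by_cases hA : A ω
  · rw [cite_pos hA, cite_pos ((h ω).mp hA)]
  · rw [cite_neg hA, cite_neg (fun hB => hA ((h ω).mpr hB))]

lemma Pr_comp_config {V Ω ε' : Type*} [Fintype V] [Fintype Ω] [Fintype ε']
    (p : Ω → ℝ) (ε : V → Ω → ε') (Φ : (V → ε') → Prop) :
    Pr p (fun ω => Φ (fun w => ε w ω)) =
      ∑ e : V → ε', cite (Φ e) (Pr p (fun ω => ∀ w, ε w ω = e w)) 0 := by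
  have step1 : ∀ e : V → ε',
      cite (Φ e) (Pr p (fun ω => ∀ w, ε w ω = e w)) 0
        = ∑ ω : Ω, cite (Φ e ∧ ∀ w, ε w ω = e w) (p ω) 0 := by
    intro e
    by_cases h : Φ e
    · rw [cite_pos h, Pr_def]
      refine Finset.sum_congr rfl fun ω _ => ?_
      by_cases h2 : ∀ w, ε w ω = e w
      · rw [cite_pos h2, cite_pos ⟨h, h2⟩]
      · rw [cite_neg h2, cite_neg (fun hc => h2 hc.2)]
    · rw [cite_neg h]
      symm
      refine Finset.sum_eq_zero fun ω _ => ?_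
      exact cite_neg (fun hc => h hc.1) _ _
  rw [Finset.sum_congr rfl fun e _ => step1 e, Finset.sum_comm, Pr_def]
  refine Finset.sum_congr rfl fun ω _ => ?_
  rw [Finset.sum_eq_single (fun w => ε w ω)]
  · by_cases h : Φ (fun w => ε w ω)
    · rw [cite_pos h, cite_pos ⟨h, fun w => rfl⟩]
    · rw [cite_neg h, cite_neg (fun hc => h hc.1)]
  · intro e _ hne
    refine cite_neg ?_ _ _
    rintro ⟨-, h⟩
    exact hne (funext fun w => (h w).symm)
  · intro h; exact absurd (Finset.mem_univ _) h

lemma Pr_comp_single {V Ω ε' : Type*} [Fintype V] [Fintype Ω] [Fintype ε']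
    (p : Ω → ℝ) (ε : V → Ω → ε') (v : V) (F : ε' → Prop) :
    Pr p (fun ω => F (ε v ω)) =
      ∑ x : ε', cite (F x) (Pr p (fun ω => ε v ω = x)) 0 := by
  have step1 : ∀ x : ε',
      cite (F x) (Pr p (fun ω => ε v ω = x)) 0
        = ∑ ω : Ω, cite (F x ∧ ε v ω = x) (p ω) 0 := by
    intro x
    by_cases h : F x
    · rw [cite_pos h, Pr_def]
      refine Finset.sum_congr rfl fun ω _ => ?_
      by_cases h2 : ε v ω = x
      · rw [cite_pos h2, cite_pos ⟨h, h2⟩]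
      · rw [cite_neg h2, cite_neg (fun hc => h2 hc.2)]
    · rw [cite_neg h]
      symm
      refine Finset.sum_eq_zero fun ω _ => ?_
      exact cite_neg (fun hc => h hc.1) _ _
  rw [Finset.sum_congr rfl fun x _ => step1 x, Finset.sum_comm, Pr_def]
  refine Finset.sum_congr rfl fun ω _ => ?_
  rw [Finset.sum_eq_single (ε v ω)]
  · by_cases h : F (ε v ω)
    · rw [cite_pos h, cite_pos ⟨h, rfl⟩]
    · rw [cite_neg h, cite_neg (fun hc => h hc.1)]
  · intro x _ hne
    exact cite_neg (fun hc => hne hc.2.symm) _ _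
  · intro h; exact absurd (Finset.mem_univ _) h

lemma sum_Pr_eq_one {Ω ε' : Type*} [Fintype Ω] [Fintype ε']
    (p : Ω → ℝ) (hp1 : ∑ ω : Ω, p ω = 1) (f : Ω → ε') :
    ∑ x : ε', Pr p (fun ω => f ω = x) = 1 := by
  rw [Finset.sum_congr rfl fun x _ => Pr_def p (fun ω => f ω = x), Finset.sum_comm, ← hp1]
  refine Finset.sum_congr rfl fun ω _ => ?_
  rw [Finset.sum_eq_single (f ω)]
  · exact cite_pos rfl _ _
  · intro x _ hne
    exact cite_neg (fun h => hne h.symm) _ _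
  · intro h; exact absurd (Finset.mem_univ _) h

lemma indep_key {V Ω ε' : Type*} [Fintype V] [Fintype Ω] [Fintype ε']
    (p : Ω → ℝ) (hp1 : ∑ ω : Ω, p ω = 1)
    (ε : V → Ω → ε')
    (hindep : ∀ e : V → ε',
      Pr p (fun ω => ∀ w : V, ε w ω = e w) = ∏ w : V, Pr p (fun ω => ε w ω = e w))
    (v : V) (F : ε' → Prop) (H : (V → ε') → Prop)
    (hH : ∀ (e : V → ε') (x : ε'), H (Function.update e v x) ↔ H e) :
    Pr p (fun ω => F (ε v ω) ∧ H (fun w => ε w ω)) =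
      Pr p (fun ω => F (ε v ω)) * Pr p (fun ω => H (fun w => ε w ω)) := by
  classical
  set σ : (V → ε') ≃ ε' × ({ w : V // w ≠ v } → ε') := Equiv.funSplitAt v ε' with hσ
  set H' : ({ w : V // w ≠ v } → ε') → Prop := fun f => ∀ x : ε', H (σ.symm (x, f)) with hH'
  have hsymm_v : ∀ (x : ε') (f : { w : V // w ≠ v } → ε'), σ.symm (x, f) v = x := by
    intro x f; simp [hσ]
  have hsymm_ne : ∀ (x : ε') (f : { w : V // w ≠ v } → ε') (w : V) (h : w ≠ v),
      σ.symm (x, f) w = f ⟨w, h⟩ := by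
    intro x f w h; simp [hσ, h]
  have hHiff : ∀ (x : ε') (f : { w : V // w ≠ v } → ε'), H (σ.symm (x, f)) ↔ H' f := by
    intro x f
    constructor
    · intro h x'
      have hupd : Function.update (σ.symm (x, f)) v x' = σ.symm (x', f) := by
        funext w
        by_cases hw : w = v
        · subst hw; simp [hsymm_v]
        · simp [Function.update_of_ne hw, hsymm_ne _ _ _ hw]
      rw [← hupd]
      exact (hH _ _).mpr h
    · intro h; exact h x
  have main : ∀ G : ε' → Prop,
      Pr p (fun ω => G (ε v ω) ∧ H (fun w => ε w ω)) =
        (∑ x : ε', cite (G x) (Pr p (fun ω => ε v ω = x)) 0) *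
          (∑ f : { w : V // w ≠ v } → ε',
            cite (H' f) (∏ w : { w : V // w ≠ v }, Pr p (fun ω => ε w.1 ω = f w)) 0) := by
    intro G
    have h0 : Pr p (fun ω => G (ε v ω) ∧ H (fun w => ε w ω)) =
        Pr p (fun ω => (fun e : V → ε' => G (e v) ∧ H e) (fun w => ε w ω)) := rfl
    rw [h0, Pr_comp_config p ε (fun e => G (e v) ∧ H e)]
    simp only [hindep]
    rw [← Equiv.sum_comp σ.symm
      (fun e : V → ε' => cite (G (e v) ∧ H e) (∏ w : V, Pr p (fun ω => ε w ω = e w)) 0)]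
    rw [Fintype.sum_prod_type]
    have h2 : ∀ (x : ε') (f : { w : V // w ≠ v } → ε'),
        cite (G (σ.symm (x, f) v) ∧ H (σ.symm (x, f)))
            (∏ w : V, Pr p (fun ω => ε w ω = σ.symm (x, f) w)) 0
          = cite (G x) (Pr p (fun ω => ε v ω = x)) 0 *
            cite (H' f) (∏ w : { w : V // w ≠ v }, Pr p (fun ω => ε w.1 ω = f w)) 0 := by
      intro x f
      have hprod : (∏ w : V, Pr p (fun ω => ε w ω = σ.symm (x, f) w))
          = Pr p (fun ω => ε v ω = x) *
            ∏ w : { w : V // w ≠ v }, Pr p (fun ω => ε w.1 ω = f w) := by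
        rw [← Finset.mul_prod_erase Finset.univ
          (fun w => Pr p (fun ω => ε w ω = σ.symm (x, f) w)) (Finset.mem_univ v),
          hsymm_v]
        congr 1
        rw [Finset.prod_subtype (Finset.univ.erase v) (p := fun w : V => w ≠ v)
          (by simp) (fun w => Pr p (fun ω => ε w ω = σ.symm (x, f) w))]
        refine Finset.prod_congr rfl fun w _ => ?_
        rw [hsymm_ne x f w.1 w.2]
      have hcond : (G (σ.symm (x, f) v) ∧ H (σ.symm (x, f))) ↔ (G x ∧ H' f) := by
        rw [hsymm_v, hHiff]
      rw [hprod]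
      rw [show cite (G (σ.symm (x, f) v) ∧ H (σ.symm (x, f)))
            (Pr p (fun ω => ε v ω = x) *
              ∏ w : { w : V // w ≠ v }, Pr p (fun ω => ε w.1 ω = f w)) 0
          = cite (G x ∧ H' f)
            (Pr p (fun ω => ε v ω = x) *
              ∏ w : { w : V // w ≠ v }, Pr p (fun ω => ε w.1 ω = f w)) 0 from by
        by_cases h : G x ∧ H' f
        · rw [cite_pos (hcond.mpr h), cite_pos h]
        · rw [cite_neg (fun hc => h (hcond.mp hc)), cite_neg h]]
      exact cite_and_mul _ _ _ _
    rw [Finset.sum_congr rfl fun x _ => Finset.sum_congr rfl fun f _ => h2 x f]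
    rw [← Finset.sum_mul_sum]
  have hF : Pr p (fun ω => F (ε v ω)) =
      ∑ x : ε', cite (F x) (Pr p (fun ω => ε v ω = x)) 0 := Pr_comp_single p ε v F
  have hT : Pr p (fun ω => H (fun w => ε w ω)) =
      ∑ f : { w : V // w ≠ v } → ε',
        cite (H' f) (∏ w : { w : V // w ≠ v }, Pr p (fun ω => ε w.1 ω = f w)) 0 := by
    have h1 := main (fun _ => True)
    simp only [true_and, cite_true] at h1
    rw [h1, sum_Pr_eq_one p hp1 (ε v), one_mul]
  rw [main F, hF, hT]

/-- If (Y_v) are defined by the structural equations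
Y_v = g_v(Y_{pa(v)}, ε_v) over a finite DAG with mutually independent noises ε_v,
then the Directed Markov Property holds: for every vertex v,
Y_v ⫫ Y_{nd(v)∖pa(v)} | Y_{pa(v)}, stated here for discrete variables via
factorization of the joint pmf. -/
theorem structural_eq_implies_directed_markov
    {V Ω ε' α : Type*} [Fintype V] [Fintype Ω] [Fintype ε'] [Fintype α]
    (p : Ω → ℝ) (hp : ∀ ω, 0 ≤ p ω) (hp1 : ∑ ω : Ω, p ω = 1)
    (E : V → V → Prop) (hacyc : ∀ v : V, ¬ Relation.TransGen E v v)
    (ε : V → Ω → ε')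
    (hindep : ∀ e : V → ε',
      Pr p (fun ω => ∀ v : V, ε v ω = e v) = ∏ v : V, Pr p (fun ω => ε v ω = e v))
    (g : V → (V → α) → ε' → α)
    (hlocal : ∀ (v : V) (q q' : V → α) (e : ε'),
      (∀ u : V, E u v → q u = q' u) → g v q e = g v q' e)
    (Y : V → Ω → α)
    (hY : ∀ (v : V) (ω : Ω), Y v ω = g v (fun u => Y u ω) (ε v ω)) :
    ∀ (v : V) (a : α) (b c : V → α),
      Pr p (fun ω => Y v ω = a ∧
            (∀ u : V, (¬ Relation.ReflTransGen E v u ∧ ¬ E u v) → Y u ω = b u) ∧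
            (∀ u : V, E u v → Y u ω = c u)) *
          Pr p (fun ω => ∀ u : V, E u v → Y u ω = c u) =
        Pr p (fun ω => Y v ω = a ∧ ∀ u : V, E u v → Y u ω = c u) *
          Pr p (fun ω =>
            (∀ u : V, (¬ Relation.ReflTransGen E v u ∧ ¬ E u v) → Y u ω = b u) ∧
            (∀ u : V, E u v → Y u ω = c u)) := by
  intro v a b c
  -- the edge relation is well-founded
  have wfE : WellFounded E := by
    haveI : IsTrans V (Relation.TransGen E) := ⟨fun _ _ _ h1 h2 => h1.trans h2⟩
    haveI : IsIrrefl V (Relation.TransGen E) := ⟨hacyc⟩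
    exact Subrelation.wf (fun {a b} h => Relation.TransGen.single h)
      (Finite.wellFounded_of_trans_of_irrefl _)
  -- parents of v are not descendants of v
  have hpar : ∀ u : V, E u v → ¬ Relation.ReflTransGen E v u := by
    intro u hE hrt
    exact hacyc v (Relation.TransGen.tail' hrt hE)
  -- Y at non-descendants of v does not depend on ε at v
  have hdet : ∀ u : V, ¬ Relation.ReflTransGen E v u →
      ∀ ω ω' : Ω, (∀ w : V, w ≠ v → ε w ω = ε w ω') → Y u ω = Y u ω' := by
    intro u
    refine WellFounded.induction (C := fun u => ¬ Relation.ReflTransGen E v u →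
      ∀ ω ω' : Ω, (∀ w : V, w ≠ v → ε w ω = ε w ω') → Y u ω = Y u ω') wfE u ?_
    intro u ih hu ω ω' hq
    have hu_ne : u ≠ v := fun h => hu (h ▸ Relation.ReflTransGen.refl)
    rw [hY u ω, hY u ω', hq u hu_ne]
    refine hlocal u _ _ _ ?_
    intro w hw
    have hw' : ¬ Relation.ReflTransGen E v w := fun hrt => hu (hrt.tail hw)
    exact ih w hw hw' ω ω' hq
  -- the events
  set B : Ω → Prop :=
    fun ω => ∀ u : V, (¬ Relation.ReflTransGen E v u ∧ ¬ E u v) → Y u ω = b u with hB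
  set C : Ω → Prop := fun ω => ∀ u : V, E u v → Y u ω = c u with hC
  set F : ε' → Prop := fun x => g v c x = a with hF
  -- B and C hold at ω iff they hold for any ω' with the same ε off v
  have hBC_det : ∀ ω ω' : Ω, (∀ w : V, w ≠ v → ε w ω = ε w ω') →
      (B ω → B ω') ∧ (C ω → C ω') := by
    intro ω ω' hq
    constructor
    · intro hb u hu
      rw [← hdet u hu.1 ω ω' hq]
      exact hb u hu
    · intro hc u hu
      rw [← hdet u (hpar u hu) ω ω' hq]
      exact hc u hu
  -- universal-form events depending only on ε away from v
  set HBC : (V → ε') → Prop :=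
    fun e => ∀ ω : Ω, (∀ w : V, w ≠ v → ε w ω = e w) → (B ω ∧ C ω) with hHBC
  set HC : (V → ε') → Prop :=
    fun e => ∀ ω : Ω, (∀ w : V, w ≠ v → ε w ω = e w) → C ω with hHC
  have hupdate : ∀ (e : V → ε') (x : ε') (ω : Ω),
      (∀ w : V, w ≠ v → ε w ω = Function.update e v x w) ↔
        (∀ w : V, w ≠ v → ε w ω = e w) := by
    intro e x ω
    constructor <;> intro h w hw <;> have h2 := h w hw
    · rwa [Function.update_of_ne hw] at h2
    · rwa [Function.update_of_ne hw]
  have hHBC_up : ∀ (e : V → ε') (x : ε'), HBC (Function.update e v x) ↔ HBC e := by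
    intro e x
    constructor <;> intro h ω hw
    · exact h ω ((hupdate e x ω).mpr hw)
    · exact h ω ((hupdate e x ω).mp hw)
  have hHC_up : ∀ (e : V → ε') (x : ε'), HC (Function.update e v x) ↔ HC e := by
    intro e x
    constructor <;> intro h ω hw
    · exact h ω ((hupdate e x ω).mpr hw)
    · exact h ω ((hupdate e x ω).mp hw)
  -- pointwise identification of the events
  have hBC_iff : ∀ ω : Ω, (B ω ∧ C ω) ↔ HBC (fun w => ε w ω) := by
    intro ω
    constructor
    · rintro ⟨hb, hc⟩ ω' hw
      have hq : ∀ w : V, w ≠ v → ε w ω = ε w ω' := fun w h => (hw w h).symm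
      exact ⟨(hBC_det ω ω' hq).1 hb, (hBC_det ω ω' hq).2 hc⟩
    · intro h
      exact h ω (fun w _ => rfl)
  have hC_iff : ∀ ω : Ω, C ω ↔ HC (fun w => ε w ω) := by
    intro ω
    constructor
    · intro hc ω' hw
      have hq : ∀ w : V, w ≠ v → ε w ω = ε w ω' := fun w h => (hw w h).symm
      exact (hBC_det ω ω' hq).2 hc
    · intro h
      exact h ω (fun w _ => rfl)
  -- on the event C, { Y v = a } coincides with an event on ε v
  have hYa : ∀ ω : Ω, C ω → (Y v ω = a ↔ F (ε v ω)) := by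
    intro ω hc
    have : g v (fun u => Y u ω) (ε v ω) = g v c (ε v ω) :=
      hlocal v _ _ _ (fun u hu => hc u hu)
    rw [hY v ω, this]
  -- rewrite the four probabilities
  have e1 : Pr p (fun ω => Y v ω = a ∧ B ω ∧ C ω) =
      Pr p (fun ω => F (ε v ω) ∧ HBC (fun w => ε w ω)) := by
    refine Pr_congr p fun ω => ?_
    constructor
    · rintro ⟨hy, hb, hc⟩
      exact ⟨(hYa ω hc).mp hy, (hBC_iff ω).mp ⟨hb, hc⟩⟩
    · rintro ⟨hf, hbc⟩
      have hbc' := (hBC_iff ω).mpr hbc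
      exact ⟨(hYa ω hbc'.2).mpr hf, hbc'.1, hbc'.2⟩
  have e2 : Pr p (fun ω => C ω) = Pr p (fun ω => HC (fun w => ε w ω)) :=
    Pr_congr p hC_iff
  have e3 : Pr p (fun ω => Y v ω = a ∧ C ω) =
      Pr p (fun ω => F (ε v ω) ∧ HC (fun w => ε w ω)) := by
    refine Pr_congr p fun ω => ?_
    constructor
    · rintro ⟨hy, hc⟩
      exact ⟨(hYa ω hc).mp hy, (hC_iff ω).mp hc⟩
    · rintro ⟨hf, hc⟩
      have hc' := (hC_iff ω).mpr hc
      exact ⟨(hYa ω hc').mpr hf, hc'⟩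
  have e4 : Pr p (fun ω => B ω ∧ C ω) =
      Pr p (fun ω => HBC (fun w => ε w ω)) :=
    Pr_congr p hBC_iff
  have i1 := indep_key p hp1 ε hindep v F HBC hHBC_up
  have i2 := indep_key p hp1 ε hindep v F HC hHC_up
  show Pr p (fun ω => Y v ω = a ∧ B ω ∧ C ω) * Pr p (fun ω => C ω) =
    Pr p (fun ω => Y v ω = a ∧ C ω) * Pr p (fun ω => B ω ∧ C ω)
  rw [e1, e2, e3, e4, i1, i2]
  ring
end

section
/- For discrete random variables (Y_v)_{v∈V} with strictly positive joint pmf f, the Directed Markov Property with respect to a finite DAG G holds if and only if f factorizes as f(y) = ∏_{v∈V} f(y_v | y_{pa(v)}). -/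
open Finset
open scoped Classical

/-- The marginal of the joint pmf `f` on the coordinates in `A`, evaluated at the
configuration `y` (i.e. the probability that all coordinates in `A` agree with `y`). -/
noncomputable def marg {V α : Type*} [Fintype V] [DecidableEq V] [Fintype α]
    (f : (V → α) → ℝ) (A : V → Prop) (y : V → α) : ℝ :=
  ∑ z : V → α, if (∀ v : V, A v → z v = y v) then f z else 0

section helpers
variable {V α : Type*} [Fintype V] [DecidableEq V] [Fintype α] {f : (V → α) → ℝ}

lemma marg_congr (A B : V → Prop) (h : ∀ v, A v ↔ B v) (y : V → α) :
    marg f A y = marg f B y := by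
  unfold marg
  refine Finset.sum_congr rfl fun z _ => ?_
  simp only [h]

lemma marg_agree {A : V → Prop} {y y' : V → α} (h : ∀ v, A v → y v = y' v) :
    marg f A y = marg f A y' := by
  unfold marg
  refine Finset.sum_congr rfl fun z _ => ?_
  refine if_congr ⟨fun h' v hv => (h' v hv).trans (h v hv), fun h' v hv => (h' v hv).trans (h v hv).symm⟩ rfl rfl

lemma marg_pos (hpos : ∀ z, 0 < f z) (A : V → Prop) (y : V → α) : 0 < marg f A y := by
  unfold marg
  refine Finset.sum_pos' (fun z _ => ?_) ⟨y, Finset.mem_univ y, ?_⟩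
  · split
    · exact (hpos z).le
    · rfl
  · rw [if_pos fun v _ => rfl]
    exact hpos y

lemma marg_all {A : V → Prop} (hA : ∀ v, A v) (y : V → α) : marg f A y = f y := by
  unfold marg
  have h : ∀ z : V → α, (∀ v, A v → z v = y v) ↔ z = y := fun z =>
    ⟨fun h => funext fun v => h v (hA v), fun h v _ => congrFun h v⟩
  simp only [h]
  simp

lemma marg_none {A : V → Prop} (hA : ∀ v, ¬ A v) (y : V → α) :
    marg f A y = ∑ z : V → α, f z := by
  unfold marg
  exact Finset.sum_congr rfl fun z _ => if_pos fun v hv => absurd hv (hA v)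

lemma marg_update {A : V → Prop} {v : V} (hv : ¬ A v) (y : V → α) (a : α) :
    marg f A (Function.update y v a) = marg f A y :=
  marg_agree fun u hu => Function.update_of_ne (fun e : _ = v => hv (e ▸ hu)) a y

lemma marg_sum_out {A : V → Prop} {v : V} (hv : ¬ A v) (y : V → α) :
    marg f A y = ∑ a : α, marg f (fun u => A u ∨ u = v) (Function.update y v a) := by
  unfold marg
  rw [Finset.sum_comm]
  refine Finset.sum_congr rfl fun z _ => ?_
  have hP : ∀ a : α, (∀ u, (A u ∨ u = v) → z u = Function.update y v a u) ↔
      ((∀ u, A u → z u = y u) ∧ a = z v) := by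
    intro a
    constructor
    · intro h
      refine ⟨fun u hu => ?_, ?_⟩
      · have := h u (Or.inl hu)
        rwa [Function.update_of_ne (fun e : _ = v => hv (e ▸ hu))] at this
      · have := h v (Or.inr rfl)
        rw [Function.update_self] at this
        exact this.symm
    · rintro ⟨h1, h2⟩ u hu
      rcases hu with hu | rfl
      · rw [Function.update_of_ne (fun e : _ = v => hv (e ▸ hu))]
        exact h1 u hu
      · rw [Function.update_self]
        exact h2.symm
  by_cases hQ : ∀ u, A u → z u = y u
  · rw [if_pos hQ]
    rw [Finset.sum_eq_single (z v)]
    · exact (if_pos ((hP (z v)).mpr ⟨hQ, rfl⟩)).symm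
    · intro a _ ha
      exact if_neg fun h => ha ((hP a).mp h).2
    · intro h
      exact absurd (Finset.mem_univ (z v)) h
  · rw [if_neg hQ]
    refine (Finset.sum_eq_zero fun a _ => ?_).symm
    exact if_neg fun h => hQ ((hP a).mp h).1

end helpers

noncomputable def pfilter {V : Type*} [Fintype V] (P : V → Prop) : Finset V :=
  univ.filter fun v => P v

lemma mem_pfilter {V : Type*} [Fintype V] {P : V → Prop} {v : V} :
    v ∈ pfilter P ↔ P v := by
  simp [pfilter]

section main
variable {V α : Type*} [Fintype V] [DecidableEq V] [Fintype α]

lemma ci_gen (E : V → V → Prop) (f : (V → α) → ℝ)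
    (hdmp : ∀ (v : V) (y : V → α),
        marg f (fun u => u = v ∨ ¬ Relation.ReflTransGen E v u) y *
            marg f (fun u => E u v) y =
          marg f (fun u => u = v ∨ E u v) y *
            marg f (fun u => ¬ Relation.ReflTransGen E v u) y)
    (v : V) :
    ∀ (n : ℕ) (C : V → Prop),
      (pfilter fun u => ¬ Relation.ReflTransGen E v u ∧ ¬ C u).card = n →
      (∀ u, E u v → C u) → (∀ u, C u → ¬ Relation.ReflTransGen E v u) →
      ∀ y : V → α,
        marg f (fun u => u = v ∨ C u) y * marg f (fun u => E u v) y =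
          marg f (fun u => u = v ∨ E u v) y * marg f C y := by
  intro n
  induction n using Nat.strong_induction_on with
  | _ n IH =>
    intro C hcard hpa hnd y
    rcases n with _ | n
    · have hC : ∀ u, C u ↔ ¬ Relation.ReflTransGen E v u := by
        intro u
        refine ⟨hnd u, fun hu => ?_⟩
        by_contra hcu
        rw [Finset.card_eq_zero] at hcard
        have : u ∈ pfilter fun u => ¬ Relation.ReflTransGen E v u ∧ ¬ C u :=
          mem_pfilter.mpr ⟨hu, hcu⟩
        rw [hcard] at this
        exact absurd this (Finset.notMem_empty u)
      rw [marg_congr (fun u => u = v ∨ C u) (fun u => u = v ∨ ¬ Relation.ReflTransGen E v u)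
            (fun u => or_congr_right (hC u)) y,
          marg_congr C (fun u => ¬ Relation.ReflTransGen E v u) hC y]
      exact hdmp v y
    · have hne : (pfilter fun u => ¬ Relation.ReflTransGen E v u ∧ ¬ C u).Nonempty := by
        rw [← Finset.card_pos, hcard]; omega
      obtain ⟨u, hu⟩ := hne
      rw [mem_pfilter] at hu
      obtain ⟨hund, hucu⟩ := hu
      have huv : u ≠ v := fun e => hund (e ▸ Relation.ReflTransGen.refl)
      have hfil : (pfilter fun w => ¬ Relation.ReflTransGen E v w ∧ ¬ (C w ∨ w = u))
          = (pfilter fun w => ¬ Relation.ReflTransGen E v w ∧ ¬ C w).erase u := by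
        ext w
        simp only [Finset.mem_erase, mem_pfilter, not_or]
        tauto
      have hcard' : (pfilter fun w => ¬ Relation.ReflTransGen E v w ∧ ¬ (C w ∨ w = u)).card = n := by
        rw [hfil, Finset.card_erase_of_mem (mem_pfilter.mpr ⟨hund, hucu⟩), hcard]
        omega
      have hpa' : ∀ w, E w v → (C w ∨ w = u) := fun w h => Or.inl (hpa w h)
      have hnd' : ∀ w, (C w ∨ w = u) → ¬ Relation.ReflTransGen E v w := by
        rintro w (h | rfl)
        · exact hnd w h
        · exact hund
      have hIH := IH n (Nat.lt_succ_self n) (fun w => C w ∨ w = u) hcard' hpa' hnd'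
      have h1 : marg f (fun w => w = v ∨ C w) y
          = ∑ a : α, marg f (fun w => w = v ∨ (C w ∨ w = u)) (Function.update y u a) := by
        rw [marg_sum_out (A := fun w => w = v ∨ C w) (v := u)
            (by rintro (h | h); exacts [huv h, hucu h]) y]
        exact Finset.sum_congr rfl fun a _ =>
          marg_congr _ _ (fun w => or_assoc) _
      have h2 : marg f C y = ∑ a : α, marg f (fun w => C w ∨ w = u) (Function.update y u a) :=
        marg_sum_out hucu y
      have h3 : ∀ a : α, marg f (fun w => E w v) (Function.update y u a) = marg f (fun w => E w v) y :=
        fun a => marg_update (A := fun w => E w v) (v := u) (fun h => hucu (hpa u h)) y a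
      have h4 : ∀ a : α, marg f (fun w => w = v ∨ E w v) (Function.update y u a)
          = marg f (fun w => w = v ∨ E w v) y :=
        fun a => marg_update (A := fun w => w = v ∨ E w v) (v := u)
          (by rintro (h | h); exacts [huv h, hucu (hpa u h)]) y a
      calc marg f (fun w => w = v ∨ C w) y * marg f (fun w => E w v) y
          = ∑ a : α, marg f (fun w => w = v ∨ (C w ∨ w = u)) (Function.update y u a)
              * marg f (fun w => E w v) (Function.update y u a) := by
            rw [h1, Finset.sum_mul]
            exact Finset.sum_congr rfl fun a _ => by rw [h3 a]
        _ = ∑ a : α, marg f (fun w => w = v ∨ E w v) (Function.update y u a)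
              * marg f (fun w => C w ∨ w = u) (Function.update y u a) :=
            Finset.sum_congr rfl fun a _ => hIH _
        _ = marg f (fun w => w = v ∨ E w v) y * marg f C y := by
            rw [h2, Finset.mul_sum]
            exact Finset.sum_congr rfl fun a _ => by rw [h4 a]

end main

section main2
variable {V α : Type*} [Fintype V] [DecidableEq V] [Fintype α]

/-- DMP ⟹ ancestral-set marginals factorize. -/
lemma dmp_ancestral (E : V → V → Prop) (hacyc : ∀ v : V, ¬ Relation.TransGen E v v)
    (f : (V → α) → ℝ) (hpos : ∀ y, 0 < f y) (hsum : ∑ y : V → α, f y = 1)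
    (hdmp : ∀ (v : V) (y : V → α),
        marg f (fun u => u = v ∨ ¬ Relation.ReflTransGen E v u) y *
            marg f (fun u => E u v) y =
          marg f (fun u => u = v ∨ E u v) y *
            marg f (fun u => ¬ Relation.ReflTransGen E v u) y) :
    ∀ (n : ℕ) (A : V → Prop), (pfilter A).card = n →
      (∀ u w, A u → E w u → A w) →
      ∀ y : V → α, marg f A y =
        ∏ w ∈ pfilter A, (marg f (fun u => u = w ∨ E u w) y / marg f (fun u => E u w) y) := by
  intro n
  induction n using Nat.strong_induction_on with
  | _ n IH =>
    intro A hcard hanc y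
    rcases n with _ | n
    · rw [Finset.card_eq_zero] at hcard
      have hA : ∀ u, ¬ A u := fun u hu => by
        have : u ∈ pfilter A := mem_pfilter.mpr hu
        rw [hcard] at this
        exact absurd this (Finset.notMem_empty u)
      rw [hcard, marg_none hA, hsum, Finset.prod_empty]
    · -- pick a maximal element v of A
      have hne : (pfilter A).Nonempty := by rw [← Finset.card_pos, hcard]; omega
      obtain ⟨v0, hv0⟩ := hne
      haveI : IsTrans V (Function.swap (Relation.TransGen E)) :=
        ⟨fun a b c h1 h2 => Relation.TransGen.trans h2 h1⟩
      haveI : IsIrrefl V (Function.swap (Relation.TransGen E)) := ⟨fun a h => hacyc a h⟩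
      obtain ⟨v, hvA, hvmax⟩ :=
        (Finite.wellFounded_of_trans_of_irrefl (Function.swap (Relation.TransGen E))).has_min
          {u | A u} ⟨v0, mem_pfilter.mp hv0⟩
      simp only [Set.mem_setOf_eq] at hvA
      have hvmax' : ∀ u, A u → ¬ Relation.TransGen E v u := fun u hu h => hvmax u hu h
      -- B = A \ {v}
      have hBanc : ∀ u w, (A u ∧ u ≠ v) → E w u → (A w ∧ w ≠ v) := by
        rintro u w ⟨hu, hne⟩ hw
        refine ⟨hanc u w hu hw, fun e => ?_⟩
        exact hvmax' u hu (e ▸ Relation.TransGen.single hw)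
      have hpaB : ∀ u, E u v → (A u ∧ u ≠ v) := fun u h =>
        ⟨hanc v u hvA h, fun e => hacyc v (Relation.TransGen.single (e ▸ h))⟩
      have hndB : ∀ u, (A u ∧ u ≠ v) → ¬ Relation.ReflTransGen E v u := by
        rintro u ⟨hu, hne⟩ h
        rcases Relation.reflTransGen_iff_eq_or_transGen.mp h with rfl | h
        · exact hne rfl
        · exact hvmax' u hu h
      have hfilB : (pfilter fun u => A u ∧ u ≠ v) = (pfilter A).erase v := by
        ext w
        simp only [Finset.mem_erase, mem_pfilter]
        tauto
      have hcardB : (pfilter fun u => A u ∧ u ≠ v).card = n := by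
        rw [hfilB, Finset.card_erase_of_mem (mem_pfilter.mpr hvA), hcard]
        omega
      have hnd0 : (pfilter fun u => ¬ Relation.ReflTransGen E v u ∧ ¬ (A u ∧ u ≠ v)).card
          = (pfilter fun u => ¬ Relation.ReflTransGen E v u ∧ ¬ (A u ∧ u ≠ v)).card := rfl
      have hci := ci_gen E f hdmp v _ (fun u => A u ∧ u ≠ v) rfl hpaB hndB y
      have hAeq : marg f (fun u => u = v ∨ (A u ∧ u ≠ v)) y = marg f A y := by
        refine marg_congr _ _ (fun u => ?_) y
        constructor
        · rintro (rfl | ⟨h, _⟩)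
          · exact hvA
          · exact h
        · intro h
          by_cases e : u = v
          · exact Or.inl e
          · exact Or.inr ⟨h, e⟩
      rw [hAeq] at hci
      -- hci : marg f A y * marg pa y = marg ({v}∪pa) y * marg B y
      have hIH := IH n (Nat.lt_succ_self n) (fun u => A u ∧ u ≠ v) hcardB hBanc y
      have hins : pfilter A = insert v (pfilter fun u => A u ∧ u ≠ v) := by
        rw [hfilB, Finset.insert_erase (mem_pfilter.mpr hvA)]
      rw [hins, Finset.prod_insert (by rw [hfilB]; exact Finset.notMem_erase v _), ← hIH]
      have hpapos := marg_pos hpos (fun u => E u v) y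
      rw [div_mul_eq_mul_div, eq_div_iff hpapos.ne', mul_comm (marg f A y)]
      rw [mul_comm] at hci
      exact hci

end main2

section main3
variable {V α : Type*} [Fintype V] [DecidableEq V] [Fintype α]

/-- Factorization ⟹ ancestral-set marginals factorize. -/
lemma fact_ancestral (E : V → V → Prop) (hacyc : ∀ v : V, ¬ Relation.TransGen E v v)
    (f : (V → α) → ℝ) (hpos : ∀ y, 0 < f y)
    (hfact : ∀ y : V → α,
      f y = ∏ v : V, marg f (fun u => u = v ∨ E u v) y / marg f (fun u => E u v) y) :
    ∀ (n : ℕ) (A : V → Prop), (pfilter fun u => ¬ A u).card = n →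
      (∀ u w, A u → E w u → A w) →
      ∀ y : V → α, marg f A y =
        ∏ w ∈ pfilter A, (marg f (fun u => u = w ∨ E u w) y / marg f (fun u => E u w) y) := by
  intro n
  induction n using Nat.strong_induction_on with
  | _ n IH =>
    intro A hcard hanc y
    rcases n with _ | n
    · rw [Finset.card_eq_zero] at hcard
      have hA : ∀ u, A u := by
        intro u
        by_contra hu
        have : u ∈ pfilter fun u => ¬ A u := mem_pfilter.mpr hu
        rw [hcard] at this
        exact absurd this (Finset.notMem_empty u)
      have hfilA : pfilter A = (univ : Finset V) := by
        ext w; simp [mem_pfilter, hA w]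
      rw [marg_all hA, hfilA, hfact y]
    · -- pick a minimal element v outside A
      have hne : (pfilter fun u => ¬ A u).Nonempty := by rw [← Finset.card_pos, hcard]; omega
      obtain ⟨v0, hv0⟩ := hne
      haveI : IsTrans V (Relation.TransGen E) := ⟨fun a b c h1 h2 => Relation.TransGen.trans h1 h2⟩
      haveI : IsIrrefl V (Relation.TransGen E) := ⟨fun a h => hacyc a h⟩
      obtain ⟨v, hvA, hvmin⟩ :=
        (Finite.wellFounded_of_trans_of_irrefl (Relation.TransGen E)).has_min
          {u | ¬ A u} ⟨v0, mem_pfilter.mp hv0⟩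
      simp only [Set.mem_setOf_eq] at hvA
      have hvmin' : ∀ u, ¬ A u → ¬ Relation.TransGen E u v := fun u hu h => hvmin u hu h
      have hpaA : ∀ u, E u v → A u := by
        intro u h
        by_contra hu
        exact hvmin' u hu (Relation.TransGen.single h)
      have hA'anc : ∀ u w, (A u ∨ u = v) → E w u → (A w ∨ w = v) := by
        rintro u w (hu | rfl) hw
        · exact Or.inl (hanc u w hu hw)
        · exact Or.inl (hpaA w hw)
      have hcard' : (pfilter fun u => ¬ (A u ∨ u = v)).card = n := by
        have hfil : (pfilter fun u => ¬ (A u ∨ u = v)) = (pfilter fun u => ¬ A u).erase v := by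
          ext w
          simp only [Finset.mem_erase, mem_pfilter, not_or]
          tauto
        rw [hfil, Finset.card_erase_of_mem (mem_pfilter (P := fun u => ¬ A u) |>.mpr hvA), hcard]
        omega
      have hIH := IH n (Nat.lt_succ_self n) (fun u => A u ∨ u = v) hcard' hA'anc
      have hsplit : marg f A y
          = ∑ a : α, marg f (fun u => A u ∨ u = v) (Function.update y v a) :=
        marg_sum_out hvA y
      have hEvv : ¬ E v v := fun h => hacyc v (Relation.TransGen.single h)
      have hvnotinA : v ∉ pfilter A := fun h => hvA (mem_pfilter.mp h)
      have hinsA : pfilter (fun u => A u ∨ u = v) = insert v (pfilter A) := by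
        ext w
        simp only [Finset.mem_insert, mem_pfilter]
        tauto
      -- invariance of factors for w ∈ A under updating coordinate v
      have hginv : ∀ (w : V), w ∈ pfilter A → ∀ a : α,
          marg f (fun u => u = w ∨ E u w) (Function.update y v a)
              / marg f (fun u => E u w) (Function.update y v a)
            = marg f (fun u => u = w ∨ E u w) y / marg f (fun u => E u w) y := by
        intro w hw a
        have hAw : A w := mem_pfilter.mp hw
        have hvw : ¬ (v = w ∨ E v w) := by
          rintro (rfl | h)
          · exact hvA hAw
          · exact hvA (hanc w v hAw h)
        rw [marg_update (A := fun u => u = w ∨ E u w) (v := v) hvw y a,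
            marg_update (A := fun u => E u w) (v := v) (fun h => hvw (Or.inr h)) y a]
      -- normalization of the factor at v
      have hnorm : ∑ a : α, marg f (fun u => u = v ∨ E u v) (Function.update y v a)
          = marg f (fun u => E u v) y := by
        have h0 : marg f (fun u => E u v) y
            = ∑ a : α, marg f (fun u => E u v ∨ u = v) (Function.update y v a) :=
          marg_sum_out (A := fun u => E u v) (v := v) hEvv y
        rw [h0]
        exact Finset.sum_congr rfl fun a _ => (marg_congr _ _ (fun u => or_comm) _).symm
      have hpapos := marg_pos hpos (fun u => E u v) y
      calc marg f A y
          = ∑ a : α, marg f (fun u => A u ∨ u = v) (Function.update y v a) := hsplit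
        _ = ∑ a : α, ∏ w ∈ pfilter (fun u => A u ∨ u = v),
              (marg f (fun u => u = w ∨ E u w) (Function.update y v a)
                / marg f (fun u => E u w) (Function.update y v a)) :=
            Finset.sum_congr rfl fun a _ => hIH _
        _ = ∑ a : α, (marg f (fun u => u = v ∨ E u v) (Function.update y v a)
                / marg f (fun u => E u v) (Function.update y v a))
              * ∏ w ∈ pfilter A, (marg f (fun u => u = w ∨ E u w) y
                / marg f (fun u => E u w) y) := by
            refine Finset.sum_congr rfl fun a _ => ?_
            rw [hinsA, Finset.prod_insert hvnotinA]
            congr 1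
            exact Finset.prod_congr rfl fun w hw => hginv w hw a
        _ = ∏ w ∈ pfilter A, (marg f (fun u => u = w ∨ E u w) y
                / marg f (fun u => E u w) y) := by
            rw [← Finset.sum_mul]
            have : ∑ a : α, marg f (fun u => u = v ∨ E u v) (Function.update y v a)
                / marg f (fun u => E u v) (Function.update y v a)
              = ∑ a : α, marg f (fun u => u = v ∨ E u v) (Function.update y v a)
                / marg f (fun u => E u v) y := by
              refine Finset.sum_congr rfl fun a _ => ?_
              rw [marg_update (A := fun u => E u v) (v := v) hEvv y a]
            rw [this, ← Finset.sum_div, hnorm, div_self hpapos.ne', one_mul]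

end main3

/-- For discrete random variables with strictly positive joint pmf f,
the Directed Markov Property with respect to a finite DAG G
(Y_v ⫫ Y_{nd(v)∖pa(v)} | Y_{pa(v)} for every v, stated via factorization of marginal
pmfs, noting that {v} ∪ (nd(v)∖pa(v)) ∪ pa(v) = {v} ∪ nd(v) and
(nd(v)∖pa(v)) ∪ pa(v) = nd(v)) holds iff f factorizes as
f(y) = ∏_v f(y_v | y_{pa(v)}). -/
theorem directed_markov_iff_factorization
    {V α : Type*} [Fintype V] [DecidableEq V] [Fintype α]
    (E : V → V → Prop) (hacyc : ∀ v : V, ¬ Relation.TransGen E v v)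
    (f : (V → α) → ℝ) (hpos : ∀ y, 0 < f y) (hsum : ∑ y : V → α, f y = 1) :
    (∀ (v : V) (y : V → α),
        marg f (fun u => u = v ∨ ¬ Relation.ReflTransGen E v u) y *
            marg f (fun u => E u v) y =
          marg f (fun u => u = v ∨ E u v) y *
            marg f (fun u => ¬ Relation.ReflTransGen E v u) y) ↔
      (∀ y : V → α,
        f y = ∏ v : V, marg f (fun u => u = v ∨ E u v) y / marg f (fun u => E u v) y) := by
  constructor
  · intro hdmp y
    have h := dmp_ancestral E hacyc f hpos hsum hdmp
      (pfilter fun _ : V => True).card (fun _ => True) rfl (fun _ _ _ _ => trivial) y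
    rw [marg_all (fun _ => trivial) y] at h
    have huniv : (pfilter fun _ : V => True) = (univ : Finset V) := by
      ext w; simp [mem_pfilter]
    rw [huniv] at h
    exact h
  · intro hfact v y
    have hnd_anc : ∀ u w, (¬ Relation.ReflTransGen E v u) → E w u →
        ¬ Relation.ReflTransGen E v w :=
      fun u w hu hw h => hu (h.tail hw)
    have hA1anc : ∀ u w, (u = v ∨ ¬ Relation.ReflTransGen E v u) → E w u →
        (w = v ∨ ¬ Relation.ReflTransGen E v w) := by
      rintro u w (rfl | hu) hw
      · exact Or.inr fun h => hacyc _ (Relation.TransGen.tail' h hw)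
      · exact Or.inr (hnd_anc u w hu hw)
    have h2 := fact_ancestral E hacyc f hpos hfact _
      (fun u => ¬ Relation.ReflTransGen E v u) rfl hnd_anc y
    have h1 := fact_ancestral E hacyc f hpos hfact _
      (fun u => u = v ∨ ¬ Relation.ReflTransGen E v u) rfl hA1anc y
    have hvnot : v ∉ pfilter (fun u => ¬ Relation.ReflTransGen E v u) :=
      fun h => (mem_pfilter.mp h) Relation.ReflTransGen.refl
    have hins : pfilter (fun u => u = v ∨ ¬ Relation.ReflTransGen E v u)
        = insert v (pfilter fun u => ¬ Relation.ReflTransGen E v u) := by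
      ext w; simp only [Finset.mem_insert, mem_pfilter]
    rw [hins, Finset.prod_insert hvnot, ← h2] at h1
    rw [h1]
    have hpapos := marg_pos hpos (fun u => E u v) y
    field_simp
end
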